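/- Let S_1 and S_2 be S-rings over finite groups G_1 and G_2 respectively, with coefficients in a field F, and let φ : S_1 → S_2 be an F-algebra isomorphism. Then φ maps every basic quantity of S_1 to a basic quantity of S_2 if and only if φ respects the Hadamard product, i.e., φ(x ∘ y) = φ(x) ∘ φ(y) for all x, y ∈ S_1. -/

import Mathlib

open scoped Classical

noncomputable section

/-- The Hadamard (pointwise) product on the group algebra. -/
def had {F : Type*} [Field F] {G : Type*} [Group G] (x y : MonoidAlgebra F G) :
    MonoidAlgebra F G :=
  MonoidAlgebra.ofCoeff (Finsupp.zipWith (· * ·) (mul_zero 0) x.coeff y.coeff)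

/-- `x ↦ x^{(-1)}`, sending `∑ a_g g` to `∑ a_g g⁻¹`. -/
def invol {F : Type*} [Field F] {G : Type*} [Group G] (x : MonoidAlgebra F G) :
    MonoidAlgebra F G :=
  MonoidAlgebra.ofCoeff (Finsupp.mapDomain (fun g => g⁻¹) x.coeff)

/-- The simple quantity `C̄ = ∑_{g ∈ C} g` of a subset `C ⊆ G`. -/
def sqty (F : Type*) [Field F] {G : Type*} [Group G] [Fintype G] (C : Set G) :
    MonoidAlgebra F G :=
  ∑ g ∈ Finset.univ.filter (· ∈ C), MonoidAlgebra.ofCoeff (Finsupp.single g (1 : F))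

/-- A Schur ring over `G`: a subalgebra of `F[G]` closed under the Hadamard product
and under `x ↦ x^{(-1)}`, containing `1` and `Ḡ`. -/
def IsSRing {F : Type*} [Field F] {G : Type*} [Group G] [Fintype G]
    (A : Subalgebra F (MonoidAlgebra F G)) : Prop :=
  (∀ x ∈ A, ∀ y ∈ A, had x y ∈ A) ∧ (∀ x ∈ A, invol x ∈ A) ∧
    (1 : MonoidAlgebra F G) ∈ A ∧ sqty F (Set.univ : Set G) ∈ A

/-- A rational S-ring: every element is fixed by the `F`-linear extension of every
group automorphism of `G`. -/
def IsRational {F : Type*} [Field F] {G : Type*} [Group G]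
    (A : Subalgebra F (MonoidAlgebra F G)) : Prop :=
  ∀ φ : MulAut G, ∀ x ∈ A, MonoidAlgebra.ofCoeff (Finsupp.mapDomain (⇑φ) x.coeff) = x

/-- An algebra isomorphism between S-rings respects the Hadamard product. -/
def RespHad {F : Type*} [Field F] {G₁ G₂ : Type*} [Group G₁] [Group G₂]
    {A₁ : Subalgebra F (MonoidAlgebra F G₁)} {A₂ : Subalgebra F (MonoidAlgebra F G₂)}
    (φ : A₁ ≃ₐ[F] A₂) : Prop :=
  ∀ (x y : A₁) (h : had (x : MonoidAlgebra F G₁) (y : MonoidAlgebra F G₁) ∈ A₁),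
    ((φ ⟨had (x : MonoidAlgebra F G₁) (y : MonoidAlgebra F G₁), h⟩ : A₂) : MonoidAlgebra F G₂) =
      had ((φ x : A₂) : MonoidAlgebra F G₂) ((φ y : A₂) : MonoidAlgebra F G₂)

/-- The data of a Schur partition exhibiting `A` as an S-ring over `G`: disjoint nonempty
basic sets `T_1, …, T_k` whose simple quantities (the basic quantities) form an `F`-basis
of `A`, with some `T_i = {1}`, the `T_i` covering `G`, and each `T_i^{(-1)}` equal to
some `T_j`. -/
structure SPartition (F : Type*) [Field F] (G : Type*) [Group G] [Fintype G]
    (A : Subalgebra F (MonoidAlgebra F G)) where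
  k : ℕ
  T : Fin k → Set G
  nonempty : ∀ i, (T i).Nonempty
  disjoint : ∀ i j, i ≠ j → Disjoint (T i) (T j)
  indep : LinearIndependent F fun i => sqty F (T i)
  span : (A : Set (MonoidAlgebra F G)) =
    (Submodule.span F (Set.range fun i => sqty F (T i)) : Set (MonoidAlgebra F G))
  one : ∃ i, T i = ({1} : Set G)
  cover : (⋃ i, T i) = (Set.univ : Set G)
  inv : ∀ i, ∃ j, (fun g => g⁻¹) '' T i = T j

lemma SPartition.sqty_mem {F : Type*} [Field F] {G : Type*} [Group G] [Fintype G]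
    {A : Subalgebra F (MonoidAlgebra F G)} (P : SPartition F G A) (i : Fin P.k) :
    sqty F (P.T i) ∈ A := by
  have h : sqty F (P.T i) ∈
      (Submodule.span F (Set.range fun i => sqty F (P.T i)) : Set (MonoidAlgebra F G)) :=
    Submodule.subset_span ⟨i, rfl⟩
  rw [← P.span] at h
  exact h

/-! In the coordinates given by the basic quantities an S-ring is `F^k`: the Hadamard product
becomes the pointwise product, because the basic sets are disjoint and cover `G`, and the basic
quantities become the standard basis vectors. These are exactly the primitive idempotents of
`F^k`, the nonzero idempotents `f` with `g * f ∈ F f` for every `g`, so a multiplicative linear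
isomorphism `F^k ≃ F^l` maps standard basis vectors to standard basis vectors. Conversely, such a
map is a coordinate permutation, hence multiplicative. -/

theorem Pi.single_mul_single_of_ne {ι R : Type*} [DecidableEq ι] [MulZeroClass R] {i j : ι}
    (h : i ≠ j) (a b : R) : (Pi.single i a : ι → R) * Pi.single j b = 0 := by
  ext x
  rcases eq_or_ne x i with rfl | hx <;> simp [*]

theorem Pi.exists_eq_single_one_of_isIdempotentElem {ι R : Type*} [DecidableEq ι]
    [MonoidWithZero R] [IsLeftCancelMulZero R] {f : ι → R}
    (hf₀ : f ≠ 0) (hf : IsIdempotentElem f)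
    (hmul : ∀ g : ι → R, ∃ c : R, g * f = c • f) : ∃ j, f = Pi.single j 1 := by
  obtain ⟨j, hj⟩ : ∃ j, f j ≠ 0 := Function.ne_iff.mp hf₀
  have hfj : f j = 1 :=
    (IsIdempotentElem.iff_eq_zero_or_one.mp (congr_fun hf j)).resolve_left hj
  have hsingle : Pi.single j 1 * f = Pi.single j 1 := by
    rw [← Pi.single_mul_left, hfj, one_mul]
  obtain ⟨c, hc⟩ := hmul (Pi.single j 1)
  rw [hsingle] at hc
  have hc₁ : c = 1 := by simpa [hfj] using (congr_fun hc j).symm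
  exact ⟨j, by rw [hc, hc₁, one_smul]⟩

theorem LinearEquiv.map_mul_of_forall_exists_map_single {ι κ R : Type*} [DecidableEq ι]
    [DecidableEq κ] [Fintype ι] [CommSemiring R] [Nontrivial R] (Φ : (ι → R) ≃ₗ[R] (κ → R))
    (h : ∀ i, ∃ j, Φ (Pi.single i 1) = Pi.single j 1) (c d : ι → R) :
    Φ (c * d) = Φ c * Φ d := by
  choose σ hσ using h
  have hσ_inj : σ.Injective := fun i l hil => by
    have : Pi.single i (1 : R) = Pi.single l 1 := Φ.injective (by rw [hσ, hσ, hil])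
    simpa [Pi.single_apply, eq_comm] using congr_fun this i
  suffices (LinearMap.mul R (ι → R)).compr₂ Φ.toLinearMap =
      (LinearMap.mul R (κ → R)).compl₁₂ Φ.toLinearMap Φ.toLinearMap from
    LinearMap.congr_fun₂ this c d
  refine LinearMap.ext_basis (Pi.basisFun R ι) (Pi.basisFun R ι) fun i l => ?_
  rcases eq_or_ne i l with rfl | hil
  · simp [hσ, ← Pi.single_mul]
  · simp [hσ, Pi.single_mul_single_of_ne hil, Pi.single_mul_single_of_ne (hσ_inj.ne hil)]

theorem LinearEquiv.exists_map_single_of_map_mul {ι κ R : Type*} [DecidableEq ι]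
    [DecidableEq κ] [CommSemiring R] [IsDomain R] (Φ : (ι → R) ≃ₗ[R] (κ → R))
    (hΦ : ∀ c d, Φ (c * d) = Φ c * Φ d) (i : ι) : ∃ j, Φ (Pi.single i 1) = Pi.single j 1 := by
  refine Pi.exists_eq_single_one_of_isIdempotentElem ?_ ?_ fun g => ⟨Φ.symm g i, ?_⟩
  · simp
  · rw [IsIdempotentElem, ← hΦ, ← Pi.single_mul, one_mul]
  · conv_lhs => rw [← Φ.apply_symm_apply g]
    rw [← hΦ, ← map_smul, ← Pi.single_mul_right, mul_one, ← Pi.single_smul', smul_eq_mul,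
      mul_one]

theorem coeff_had {F : Type*} [Field F] {G : Type*} [Group G] (x y : MonoidAlgebra F G)
    (g : G) : (had x y).coeff g = x.coeff g * y.coeff g := by
  rw [had, MonoidAlgebra.coeff_ofCoeff, Finsupp.zipWith_apply]

theorem coeff_sqty {F : Type*} [Field F] {G : Type*} [Group G] [Fintype G] (C : Set G)
    (g : G) : (sqty F C).coeff g = if g ∈ C then 1 else 0 := by
  rw [sqty, MonoidAlgebra.coeff_sum, Finsupp.finsetSum_apply]
  simp [Finsupp.single_apply]

namespace SPartition

variable {F : Type*} [Field F]

section

variable {G : Type*} [Group G] [Fintype G] {A : Subalgebra F (MonoidAlgebra F G)}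
  (P : SPartition F G A)

def basis : Module.Basis (Fin P.k) F A :=
  .mk (v := fun i => ⟨sqty F (P.T i), P.sqty_mem i⟩) (.of_comp A.val.toLinearMap P.indep) <| by
    rintro ⟨x, hx⟩ -
    have hx' : x ∈ (Submodule.span F (Set.range fun i => sqty F (P.T i)) : Set _) :=
      P.span ▸ hx
    obtain ⟨c, hc⟩ := (Submodule.mem_span_range_iff_exists_fun F).1 hx'
    exact (Submodule.mem_span_range_iff_exists_fun F).2 ⟨c, Subtype.ext (by simpa using hc)⟩

theorem basis_apply (i : Fin P.k) : P.basis i = ⟨sqty F (P.T i), P.sqty_mem i⟩ := by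
  simp [basis]

@[simp]
theorem coe_basis (i : Fin P.k) : (P.basis i : MonoidAlgebra F G) = sqty F (P.T i) := by
  rw [basis_apply]

theorem coeff_basis_equivFun_symm (c : Fin P.k → F) {g : G} {i : Fin P.k} (hg : g ∈ P.T i) :
    (P.basis.equivFun.symm c : MonoidAlgebra F G).coeff g = c i := by
  simp only [Module.Basis.equivFun_symm_apply, AddSubmonoidClass.coe_finsetSum,
    SetLike.val_smul, coe_basis, MonoidAlgebra.coeff_sum, Finsupp.finsetSum_apply]
  rw [Finset.sum_eq_single i]
  · simp [coeff_sqty, hg]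
  · intro l _ hl
    have hgl : g ∉ P.T l := fun hgl => (P.disjoint l i hl).ne_of_mem hgl hg rfl
    simp [coeff_sqty, hgl]
  · simp

theorem had_basis_equivFun_symm (c d : Fin P.k → F) :
    had (P.basis.equivFun.symm c : MonoidAlgebra F G) (P.basis.equivFun.symm d) =
      P.basis.equivFun.symm (c * d) := by
  ext g
  obtain ⟨i, hg⟩ := Set.mem_iUnion.1 (P.cover ▸ Set.mem_univ g)
  rw [coeff_had, P.coeff_basis_equivFun_symm _ hg, P.coeff_basis_equivFun_symm _ hg,
    P.coeff_basis_equivFun_symm _ hg, Pi.mul_apply]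

end

section coordEquiv

variable {G₁ : Type*} [Group G₁] [Fintype G₁] {G₂ : Type*} [Group G₂] [Fintype G₂]
  {A₁ : Subalgebra F (MonoidAlgebra F G₁)} {A₂ : Subalgebra F (MonoidAlgebra F G₂)}
  (P₁ : SPartition F G₁ A₁) (P₂ : SPartition F G₂ A₂) (φ : A₁ ≃ₐ[F] A₂)

def coordEquiv : (Fin P₁.k → F) ≃ₗ[F] (Fin P₂.k → F) :=
  P₁.basis.equivFun.symm ≪≫ₗ φ.toLinearEquiv ≪≫ₗ P₂.basis.equivFun

theorem equivFun_symm_coordEquiv (c : Fin P₁.k → F) :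
    P₂.basis.equivFun.symm (coordEquiv P₁ P₂ φ c) = φ (P₁.basis.equivFun.symm c) := by
  simp [coordEquiv]

theorem coordEquiv_single_eq_single_iff (i : Fin P₁.k) (j : Fin P₂.k) :
    coordEquiv P₁ P₂ φ (Pi.single i 1) = Pi.single j 1 ↔
      ((φ ⟨sqty F (P₁.T i), P₁.sqty_mem i⟩ : A₂) : MonoidAlgebra F G₂) = sqty F (P₂.T j) := by
  rw [← P₂.basis.equivFun.symm.injective.eq_iff, equivFun_symm_coordEquiv,
    Basis.equivFun_symm_single, Basis.equivFun_symm_single, basis_apply,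
    ← Subtype.val_inj, coe_basis]

theorem respHad_iff_coordEquiv_map_mul :
    RespHad φ ↔
      ∀ c d, coordEquiv P₁ P₂ φ (c * d) = coordEquiv P₁ P₂ φ c * coordEquiv P₁ P₂ φ d := by
  simp only [RespHad, P₁.basis.equivFun.symm.surjective.forall]
  refine forall₂_congr fun c d => ?_
  have hhad := P₁.had_basis_equivFun_symm c d
  have hmem :
      had (P₁.basis.equivFun.symm c : MonoidAlgebra F G₁) (P₁.basis.equivFun.symm d) ∈ A₁ :=
    hhad ▸ (P₁.basis.equivFun.symm (c * d)).2
  have hmk : (⟨_, hmem⟩ : A₁) = P₁.basis.equivFun.symm (c * d) := Subtype.ext hhad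
  rw [forall_prop_of_true hmem, hmk,
    ← equivFun_symm_coordEquiv, ← equivFun_symm_coordEquiv, ← equivFun_symm_coordEquiv,
    P₂.had_basis_equivFun_symm, Subtype.val_inj, P₂.basis.equivFun.symm.injective.eq_iff]

end coordEquiv

end SPartition

/-- An `F`-algebra isomorphism between S-rings maps basic quantities to basic quantities
if and only if it respects the Hadamard product. -/
theorem sring_iso_iff_respects_hadamard {F : Type*} [Field F]
    {G₁ : Type*} [Group G₁] [Fintype G₁] {G₂ : Type*} [Group G₂] [Fintype G₂]
    {A₁ : Subalgebra F (MonoidAlgebra F G₁)} {A₂ : Subalgebra F (MonoidAlgebra F G₂)}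
    (P₁ : SPartition F G₁ A₁) (P₂ : SPartition F G₂ A₂) (φ : A₁ ≃ₐ[F] A₂) :
    (∀ i, ∃ j,
        ((φ ⟨sqty F (P₁.T i), P₁.sqty_mem i⟩ : A₂) : MonoidAlgebra F G₂) = sqty F (P₂.T j))
      ↔ RespHad φ := by
  rw [SPartition.respHad_iff_coordEquiv_map_mul P₁ P₂]
  simp only [← SPartition.coordEquiv_single_eq_single_iff]
  exact ⟨(P₁.coordEquiv P₂ φ).map_mul_of_forall_exists_map_single,
    (P₁.coordEquiv P₂ φ).exists_map_single_of_map_mul⟩
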